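/- arXiv:q-alg/9709034 — 3 statements merged into one kernel-verified Lean document; each statement's English description precedes it below -/
import Mathlib

section
/- The form C(A,B) = Tr([J,A]B) is a 2-cocycle on the Lie algebra glbar: it satisfies C([A,B],X) + C([B,X],A) + C([X,A],B) = 0 for all A, B, X ∈ glbar; consequently the vector space hgl = glbar ⊕ ℂ·K with bracket [(A,a),(B,b)] = ([A,B], C(A,B)) is a Lie algebra over ℂ (the bracket is bilinear, alternating, and satisfies the Jacobi identity), with K = (0,1) central. -/
/-- `glbar`: matrices over `ℂ` indexed by `ℤ × ℤ` with only finitely many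
nonzero diagonals. -/
def HasFinDiags (A : ℤ → ℤ → ℂ) : Prop :=
  ∃ S : Finset ℤ, ∀ i j : ℤ, j - i ∉ S → A i j = 0

/-- The matrix product `(AB)_{ij} = Σ_{k ∈ ℤ} a_{ik} b_{kj}`. -/
noncomputable def matMul (A B : ℤ → ℤ → ℂ) : ℤ → ℤ → ℂ :=
  fun i j => ∑ᶠ k : ℤ, A i k * B k j

/-- The commutator `[X,Y] = XY - YX`. -/
noncomputable def matBr (X Y : ℤ → ℤ → ℂ) : ℤ → ℤ → ℂ :=
  matMul X Y - matMul Y X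

/-- The diagonal matrix `J` with `J_{ii} = 1` for `i ≤ 0` and `J_{ii} = 0`
for `i > 0`. -/
noncomputable def Jmat : ℤ → ℤ → ℂ :=
  fun i j => if i = j ∧ i ≤ 0 then 1 else 0

/-- The trace: sum of the diagonal entries. -/
noncomputable def matTr (X : ℤ → ℤ → ℂ) : ℂ :=
  ∑ᶠ i : ℤ, X i i

/-- The 2-cocycle `C(A,B) = Tr([J,A]B)`. -/
noncomputable def Ccoc (A B : ℤ → ℤ → ℂ) : ℂ :=
  matTr (matMul (matBr Jmat A) B)

/-- The bracket on `hgl = glbar ⊕ ℂ·K`: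
`[(A,a),(B,b)] = ([A,B], C(A,B))`.  Here `K = (0,1)`. -/
noncomputable def hglBr (P Q : (ℤ → ℤ → ℂ) × ℂ) : (ℤ → ℤ → ℂ) × ℂ :=
  (matBr P.1 Q.1, Ccoc P.1 Q.1)

section Aux

open Function

/-! ### Basic finiteness lemmas -/

private lemma row_fin {A : ℤ → ℤ → ℂ} (hA : HasFinDiags A) (i : ℤ) :
    (support (A i)).Finite := by
  obtain ⟨S, hS⟩ := hA
  refine Set.Finite.subset (S.image (· + i)).finite_toSet (fun k hk => ?_)
  simp only [Finset.coe_image, Set.mem_image, Finset.mem_coe]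
  refine ⟨k - i, ?_, by omega⟩
  by_contra h
  exact hk (hS i k h)

private lemma col_fin {A : ℤ → ℤ → ℂ} (hA : HasFinDiags A) (j : ℤ) :
    (support fun k => A k j).Finite := by
  obtain ⟨S, hS⟩ := hA
  refine Set.Finite.subset (S.image (fun d => j - d)).finite_toSet (fun k hk => ?_)
  simp only [Finset.coe_image, Set.mem_image, Finset.mem_coe]
  refine ⟨j - k, ?_, by omega⟩
  by_contra h
  exact hk (hS k j h)

private lemma ent_fin_left {A : ℤ → ℤ → ℂ} (hA : HasFinDiags A) (B : ℤ → ℤ → ℂ) (i j : ℤ) :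
    (support fun k => A i k * B k j).Finite :=
  (row_fin hA i).subset (fun k hk => by
    simp only [mem_support] at hk ⊢
    exact left_ne_zero_of_mul hk)

private lemma ent_fin_right (A : ℤ → ℤ → ℂ) {B : ℤ → ℤ → ℂ} (hB : HasFinDiags B) (i j : ℤ) :
    (support fun k => A i k * B k j).Finite :=
  (col_fin hB j).subset (fun k hk => by
    simp only [mem_support] at hk ⊢
    exact right_ne_zero_of_mul hk)

/-- matrices with finitely many nonzero entries overall -/
private def FinSupp (M : ℤ → ℤ → ℂ) : Prop :=
  (support fun p : ℤ × ℤ => M p.1 p.2).Finite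

private lemma diag_fin {M : ℤ → ℤ → ℂ} (hM : FinSupp M) :
    (support fun i : ℤ => M i i).Finite := by
  have h : (support fun i : ℤ => M i i) ⊆
      (fun i : ℤ => ((i, i) : ℤ × ℤ)) ⁻¹' (support fun p : ℤ × ℤ => M p.1 p.2) :=
    fun i hi => hi
  exact (hM.preimage (fun a _ b _ hab => by simpa using congrArg Prod.fst hab)).subset h

private lemma finSupp_hasFinDiags {M : ℤ → ℤ → ℂ} (hM : FinSupp M) : HasFinDiags M := by
  refine ⟨(hM.toFinset.image fun p => p.2 - p.1), fun i j h => ?_⟩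
  by_contra h0
  exact h (Finset.mem_image.2 ⟨(i, j), hM.mem_toFinset.2 h0, rfl⟩)

private lemma finsum_zero_of_all {f : ℤ → ℂ} (h : ∀ k, f k = 0) : ∑ᶠ k, f k = 0 := by
  rw [finsum_congr h, finsum_zero]

private lemma finSupp_add {M N : ℤ → ℤ → ℂ} (hM : FinSupp M) (hN : FinSupp N) :
    FinSupp (M + N) :=
  (hM.union hN).subset (fun p hp => by
    by_contra h
    simp only [Set.mem_union, mem_support, not_or, not_not] at h
    exact hp (by simp [h.1, h.2]))

private lemma finSupp_sub {M N : ℤ → ℤ → ℂ} (hM : FinSupp M) (hN : FinSupp N) :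
    FinSupp (M - N) :=
  (hM.union hN).subset (fun p hp => by
    by_contra h
    simp only [Set.mem_union, mem_support, not_or, not_not] at h
    exact hp (by simp [h.1, h.2]))

private lemma finSupp_mul_left {M N : ℤ → ℤ → ℂ} (hM : FinSupp M) (hN : HasFinDiags N) :
    FinSupp (matMul M N) := by
  obtain ⟨S, hS⟩ := hN
  refine Set.Finite.subset
    ((hM.image Prod.fst).prod (Set.Finite.image2 (fun k d => d + k) (hM.image Prod.snd)
      S.finite_toSet)) (fun p hp => ?_)
  simp only [mem_support] at hp
  have hex : ∃ k, M p.1 k * N k p.2 ≠ 0 := by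
    by_contra h
    push_neg at h
    exact hp (finsum_zero_of_all h)
  obtain ⟨k, hk⟩ := hex
  have hM0 : M p.1 k ≠ 0 := left_ne_zero_of_mul hk
  have hN0 : N k p.2 ≠ 0 := right_ne_zero_of_mul hk
  have hdS : p.2 - k ∈ S := by
    by_contra h
    exact hN0 (hS k p.2 h)
  constructor
  · exact ⟨(p.1, k), hM0, rfl⟩
  · exact ⟨k, ⟨(p.1, k), hM0, rfl⟩, p.2 - k, hdS, by show p.2 - k + k = p.2; omega⟩

private lemma finSupp_mul_right {M N : ℤ → ℤ → ℂ} (hN : HasFinDiags N) (hM : FinSupp M) :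
    FinSupp (matMul N M) := by
  obtain ⟨S, hS⟩ := hN
  refine Set.Finite.subset
    ((Set.Finite.image2 (fun k d => k - d) (hM.image Prod.fst) S.finite_toSet).prod
      (hM.image Prod.snd)) (fun p hp => ?_)
  simp only [mem_support] at hp
  have hex : ∃ k, N p.1 k * M k p.2 ≠ 0 := by
    by_contra h
    push_neg at h
    exact hp (finsum_zero_of_all h)
  obtain ⟨k, hk⟩ := hex
  have hN0 : N p.1 k ≠ 0 := left_ne_zero_of_mul hk
  have hM0 : M k p.2 ≠ 0 := right_ne_zero_of_mul hk
  have hdS : k - p.1 ∈ S := by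
    by_contra h
    exact hN0 (hS p.1 k h)
  constructor
  · exact ⟨k, ⟨(k, p.2), hM0, rfl⟩, k - p.1, hdS, by show k - (k - p.1) = p.1; omega⟩
  · exact ⟨(k, p.2), hM0, rfl⟩

/-! ### HasFinDiags closure lemmas -/

private lemma hJ : HasFinDiags Jmat := by
  refine ⟨{0}, fun i j h => ?_⟩
  simp only [Finset.mem_singleton] at h
  simp only [Jmat, ite_eq_right_iff]
  rintro ⟨rfl, -⟩
  exact absurd (by omega) h

private lemma fd_mul {A B : ℤ → ℤ → ℂ} (hA : HasFinDiags A) (hB : HasFinDiags B) :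
    HasFinDiags (matMul A B) := by
  classical
  obtain ⟨S, hS⟩ := hA
  obtain ⟨T, hT⟩ := hB
  refine ⟨S.biUnion (fun d => T.image (· + d)), fun i j h => ?_⟩
  refine finsum_zero_of_all (fun k => ?_)
  by_cases hAk : A i k = 0
  · simp [hAk]
  by_cases hBk : B k j = 0
  · simp [hBk]
  exfalso
  apply h
  have h1 : k - i ∈ S := by by_contra hc; exact hAk (hS i k hc)
  have h2 : j - k ∈ T := by by_contra hc; exact hBk (hT k j hc)
  exact Finset.mem_biUnion.2 ⟨k - i, h1, Finset.mem_image.2 ⟨j - k, h2, by omega⟩⟩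

private lemma fd_sub {A B : ℤ → ℤ → ℂ} (hA : HasFinDiags A) (hB : HasFinDiags B) :
    HasFinDiags (A - B) := by
  obtain ⟨S, hS⟩ := hA
  obtain ⟨T, hT⟩ := hB
  refine ⟨S ∪ T, fun i j h => ?_⟩
  simp only [Finset.mem_union, not_or] at h
  simp [Pi.sub_apply, hS i j h.1, hT i j h.2]

private lemma fd_br {A B : ℤ → ℤ → ℂ} (hA : HasFinDiags A) (hB : HasFinDiags B) :
    HasFinDiags (matBr A B) :=
  fd_sub (fd_mul hA hB) (fd_mul hB hA)

/-! ### Algebraic properties of matMul -/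

private lemma matMul_add_left {A B C : ℤ → ℤ → ℂ} (hC : HasFinDiags C) :
    matMul (A + B) C = matMul A C + matMul B C := by
  funext i j
  simp only [matMul, Pi.add_apply]
  rw [← finsum_add_distrib (ent_fin_right A hC i j) (ent_fin_right B hC i j)]
  exact finsum_congr (fun k => by ring)

private lemma matMul_add_right {A B C : ℤ → ℤ → ℂ} (hA : HasFinDiags A) :
    matMul A (B + C) = matMul A B + matMul A C := by
  funext i j
  simp only [matMul, Pi.add_apply]
  rw [← finsum_add_distrib (ent_fin_left hA B i j) (ent_fin_left hA C i j)]
  exact finsum_congr (fun k => by ring)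

private lemma matMul_sub_left {A B C : ℤ → ℤ → ℂ} (hC : HasFinDiags C) :
    matMul (A - B) C = matMul A C - matMul B C := by
  funext i j
  simp only [matMul, Pi.sub_apply]
  rw [← finsum_sub_distrib (ent_fin_right A hC i j) (ent_fin_right B hC i j)]
  exact finsum_congr (fun k => by ring)

private lemma matMul_sub_right {A B C : ℤ → ℤ → ℂ} (hA : HasFinDiags A) :
    matMul A (B - C) = matMul A B - matMul A C := by
  funext i j
  simp only [matMul, Pi.sub_apply]
  rw [← finsum_sub_distrib (ent_fin_left hA B i j) (ent_fin_left hA C i j)]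
  exact finsum_congr (fun k => by ring)

private lemma matMul_smul_left {A : ℤ → ℤ → ℂ} (B : ℤ → ℤ → ℂ) (c : ℂ)
    (hA : HasFinDiags A) : matMul (c • A) B = c • matMul A B := by
  funext i j
  simp only [matMul, Pi.smul_apply, smul_eq_mul]
  rw [mul_finsum _ c]
  exact finsum_congr (fun k => by ring)

private lemma matMul_smul_right (A : ℤ → ℤ → ℂ) {B : ℤ → ℤ → ℂ} (c : ℂ)
    (hB : HasFinDiags B) : matMul A (c • B) = c • matMul A B := by
  funext i j
  simp only [matMul, Pi.smul_apply, smul_eq_mul]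
  rw [mul_finsum _ c]
  exact finsum_congr (fun k => by ring)

private lemma matMul_zero_left (B : ℤ → ℤ → ℂ) : matMul 0 B = 0 := by
  funext i j
  simp only [matMul, Pi.zero_apply]
  exact finsum_zero_of_all (fun k => by simp)

private lemma matMul_zero_right (A : ℤ → ℤ → ℂ) : matMul A 0 = 0 := by
  funext i j
  simp only [matMul, Pi.zero_apply]
  exact finsum_zero_of_all (fun k => by simp)

private lemma matMul_assoc {A B C : ℤ → ℤ → ℂ} (hA : HasFinDiags A) (hC : HasFinDiags C) :
    matMul (matMul A B) C = matMul A (matMul B C) := by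
  classical
  funext i j
  set s := (row_fin hA i).toFinset with hsdef
  set t := (col_fin hC j).toFinset with htdef
  have hmems : ∀ k, A i k ≠ 0 → k ∈ s := fun k hk => by
    simp [hsdef, Set.Finite.mem_toFinset, mem_support, hk]
  have hmemt : ∀ l, C l j ≠ 0 → l ∈ t := fun l hl => by
    simp [htdef, Set.Finite.mem_toFinset, mem_support, hl]
  have hAB : ∀ l, matMul A B i l = ∑ k ∈ s, A i k * B k l := fun l =>
    finsum_eq_sum_of_support_subset _ (fun k hk =>
      hmems k (left_ne_zero_of_mul hk))
  have hBC : ∀ k, matMul B C k j = ∑ l ∈ t, B k l * C l j := fun k =>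
    finsum_eq_sum_of_support_subset _ (fun l hl =>
      hmemt l (right_ne_zero_of_mul hl))
  have hL : matMul (matMul A B) C i j = ∑ l ∈ t, (∑ k ∈ s, A i k * B k l) * C l j := by
    show (∑ᶠ l, matMul A B i l * C l j) = _
    rw [finsum_eq_sum_of_support_subset _
      (fun l hl => hmemt l (right_ne_zero_of_mul hl))]
    exact Finset.sum_congr rfl (fun l _ => by rw [hAB])
  have hR : matMul A (matMul B C) i j = ∑ k ∈ s, A i k * ∑ l ∈ t, B k l * C l j := by
    show (∑ᶠ k, A i k * matMul B C k j) = _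
    rw [finsum_eq_sum_of_support_subset _
      (fun k hk => hmems k (left_ne_zero_of_mul hk))]
    exact Finset.sum_congr rfl (fun k _ => by rw [hBC])
  rw [hL, hR]
  simp_rw [Finset.sum_mul, Finset.mul_sum]
  rw [Finset.sum_comm]
  exact Finset.sum_congr rfl (fun k _ => Finset.sum_congr rfl (fun l _ => by ring))

/-! ### Trace lemmas -/

private lemma matTr_add {M N : ℤ → ℤ → ℂ} (hM : FinSupp M) (hN : FinSupp N) :
    matTr (M + N) = matTr M + matTr N := by
  simp only [matTr, Pi.add_apply]
  exact finsum_add_distrib (diag_fin hM) (diag_fin hN)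

private lemma matTr_sub {M N : ℤ → ℤ → ℂ} (hM : FinSupp M) (hN : FinSupp N) :
    matTr (M - N) = matTr M - matTr N := by
  simp only [matTr, Pi.sub_apply]
  exact finsum_sub_distrib (diag_fin hM) (diag_fin hN)

private lemma matTr_smul {M : ℤ → ℤ → ℂ} (c : ℂ) (hM : FinSupp M) :
    matTr (c • M) = c * matTr M := by
  simp only [matTr, Pi.smul_apply, smul_eq_mul]
  exact (mul_finsum _ c).symm

private lemma matTr_zero : matTr 0 = 0 := by
  simp only [matTr, Pi.zero_apply, finsum_zero]

/-- Trace cyclicity: `Tr(MN) = Tr(NM)` when `M` has finite total support. -/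
private lemma matTr_mul_comm {M : ℤ → ℤ → ℂ} (N : ℤ → ℤ → ℂ) (hM : FinSupp M) :
    matTr (matMul M N) = matTr (matMul N M) := by
  classical
  set s := (hM.image Prod.fst).toFinset with hsdef
  set t := (hM.image Prod.snd).toFinset with htdef
  have hmem : ∀ i k : ℤ, M i k ≠ 0 → i ∈ s ∧ k ∈ t := by
    intro i k h
    constructor
    · simp only [hsdef, Set.Finite.mem_toFinset, Set.mem_image]
      exact ⟨(i, k), h, rfl⟩
    · simp only [htdef, Set.Finite.mem_toFinset, Set.mem_image]
      exact ⟨(i, k), h, rfl⟩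
  have h1 : matTr (matMul M N) = ∑ i ∈ s, ∑ k ∈ t, M i k * N k i := by
    have inner : ∀ i, matMul M N i i = ∑ k ∈ t, M i k * N k i := fun i =>
      finsum_eq_sum_of_support_subset _ (fun k hk =>
        (hmem i k (left_ne_zero_of_mul hk)).2)
    show (∑ᶠ i, matMul M N i i) = _
    rw [finsum_congr inner]
    refine finsum_eq_sum_of_support_subset _ (fun i hi => ?_)
    rw [Function.mem_support] at hi
    obtain ⟨k, _, hne⟩ := Finset.exists_ne_zero_of_sum_ne_zero hi
    exact (hmem i k (left_ne_zero_of_mul hne)).1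
  have h2 : matTr (matMul N M) = ∑ k ∈ t, ∑ i ∈ s, N k i * M i k := by
    have inner : ∀ k, matMul N M k k = ∑ i ∈ s, N k i * M i k := fun k =>
      finsum_eq_sum_of_support_subset _ (fun i hi =>
        (hmem i k (right_ne_zero_of_mul hi)).1)
    show (∑ᶠ k, matMul N M k k) = _
    rw [finsum_congr inner]
    refine finsum_eq_sum_of_support_subset _ (fun k hk => ?_)
    rw [Function.mem_support] at hk
    obtain ⟨i, _, hne⟩ := Finset.exists_ne_zero_of_sum_ne_zero hk
    exact (hmem i k (right_ne_zero_of_mul hne)).2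
  rw [h1, h2, Finset.sum_comm]
  exact Finset.sum_congr rfl (fun k _ => Finset.sum_congr rfl (fun i _ => by ring))

/-! ### Lemmas about J -/

private lemma mulJ_left (A : ℤ → ℤ → ℂ) (i j : ℤ) :
    matMul Jmat A i j = if i ≤ 0 then A i j else 0 := by
  show (∑ᶠ k, Jmat i k * A k j) = _
  rw [finsum_eq_single _ i (fun x hx => by
    simp only [Jmat]
    rw [if_neg (fun h => hx h.1.symm), zero_mul])]
  simp only [Jmat]
  by_cases h : i ≤ 0 <;> simp [h]

private lemma mulJ_right (A : ℤ → ℤ → ℂ) (i j : ℤ) :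
    matMul A Jmat i j = if j ≤ 0 then A i j else 0 := by
  show (∑ᶠ k, A i k * Jmat k j) = _
  rw [finsum_eq_single _ j (fun x hx => by
    simp only [Jmat]
    rw [if_neg (fun h => hx h.1), mul_zero])]
  simp only [Jmat]
  by_cases h : j ≤ 0 <;> simp [h]

private lemma trJ_zero (Y : ℤ → ℤ → ℂ) : matTr (matBr Jmat Y) = 0 := by
  refine finsum_zero_of_all (fun i => ?_)
  show matMul Jmat Y i i - matMul Y Jmat i i = 0
  rw [mulJ_left, mulJ_right, sub_self]

private lemma finSupp_brJ {A : ℤ → ℤ → ℂ} (hA : HasFinDiags A) :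
    FinSupp (matBr Jmat A) := by
  classical
  obtain ⟨S, hS⟩ := hA
  set m : ℕ := S.sup (fun d => d.natAbs) with hmdef
  refine Set.Finite.subset ((Set.finite_Icc (-(m : ℤ)) m).prod
    (Set.finite_Icc (-(m : ℤ)) m)) (fun p hp => ?_)
  obtain ⟨i, j⟩ := p
  simp only [mem_support] at hp
  have hval : matBr Jmat A i j =
      (if i ≤ 0 then A i j else 0) - (if j ≤ 0 then A i j else 0) := by
    show matMul Jmat A i j - matMul A Jmat i j = _
    rw [mulJ_left, mulJ_right]
  have hcase : (i ≤ 0 ∧ ¬ j ≤ 0) ∨ (¬ i ≤ 0 ∧ j ≤ 0) := by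
    by_cases h1 : i ≤ 0 <;> by_cases h2 : j ≤ 0
    · exact absurd (by rw [hval, if_pos h1, if_pos h2, sub_self]) hp
    · exact Or.inl ⟨h1, h2⟩
    · exact Or.inr ⟨h1, h2⟩
    · exact absurd (by rw [hval, if_neg h1, if_neg h2, sub_self]) hp
  have hA0 : A i j ≠ 0 := by
    intro h
    apply hp
    rw [hval, h]
    simp
  have hd : j - i ∈ S := by
    by_contra h
    exact hA0 (hS i j h)
  have hdm : (j - i).natAbs ≤ m := Finset.le_sup hd
  simp only [Set.mem_prod, Set.mem_Icc]
  omega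

/-! ### Key identities for the cocycle -/

/-- Leibniz rule: `[J, AB] = [J,A]B + A[J,B]`. -/
private lemma leib {A B : ℤ → ℤ → ℂ} (hA : HasFinDiags A) (hB : HasFinDiags B) :
    matBr Jmat (matMul A B) =
      matMul (matBr Jmat A) B + matMul A (matBr Jmat B) := by
  show matMul Jmat (matMul A B) - matMul (matMul A B) Jmat = _
  rw [matBr, matBr, matMul_sub_left hB, matMul_sub_right hA,
    matMul_assoc hJ hB, matMul_assoc hA hB, matMul_assoc hA hJ]
  abel

/-- Antisymmetry of the cocycle. -/
private lemma Ccoc_antisymm {A B : ℤ → ℤ → ℂ} (hA : HasFinDiags A) (hB : HasFinDiags B) :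
    Ccoc A B + Ccoc B A = 0 := by
  have h0 : matTr (matBr Jmat (matMul A B)) = 0 := trJ_zero _
  rw [leib hA hB, matTr_add (finSupp_mul_left (finSupp_brJ hA) hB)
    (finSupp_mul_right hA (finSupp_brJ hB))] at h0
  have hc : matTr (matMul A (matBr Jmat B)) = matTr (matMul (matBr Jmat B) A) :=
    (matTr_mul_comm A (finSupp_brJ hB)).symm
  rw [hc] at h0
  exact h0

/-- Core identity: `C([A,B],X) = C(A,[B,X]) + C(B,[X,A])`. -/
private lemma Ccoc_core {A B X : ℤ → ℤ → ℂ} (hA : HasFinDiags A) (hB : HasFinDiags B)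
    (hX : HasFinDiags X) :
    Ccoc (matBr A B) X = Ccoc A (matBr B X) + Ccoc B (matBr X A) := by
  set a := matBr Jmat A with hadef
  set b := matBr Jmat B with hbdef
  have ha' : FinSupp a := finSupp_brJ hA
  have hb' : FinSupp b := finSupp_brJ hB
  have haD : HasFinDiags a := finSupp_hasFinDiags ha'
  have hbD : HasFinDiags b := finSupp_hasFinDiags hb'
  -- Step 1: [J,[A,B]] = (aB - Ba) + (Ab - bA)
  have e1 : matBr Jmat (matBr A B) =
      (matMul a B + matMul A b) - (matMul b A + matMul B a) := by
    have : matBr Jmat (matBr A B) =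
        matBr Jmat (matMul A B) - matBr Jmat (matMul B A) := by
      show matMul Jmat (matMul A B - matMul B A)
          - matMul (matMul A B - matMul B A) Jmat = _
      rw [matMul_sub_right hJ, matMul_sub_left hJ]
      show _ = (matMul Jmat (matMul A B) - matMul (matMul A B) Jmat)
        - (matMul Jmat (matMul B A) - matMul (matMul B A) Jmat)
      abel
    rw [this, leib hA hB, leib hB hA]
  -- Step 2: expand the trace
  have hsupp1 : FinSupp (matMul (matMul a B) X) :=
    finSupp_mul_left (finSupp_mul_left ha' hB) hX
  have hsupp2 : FinSupp (matMul (matMul A b) X) :=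
    finSupp_mul_left (finSupp_mul_right hA hb') hX
  have hsupp3 : FinSupp (matMul (matMul b A) X) :=
    finSupp_mul_left (finSupp_mul_left hb' hA) hX
  have hsupp4 : FinSupp (matMul (matMul B a) X) :=
    finSupp_mul_left (finSupp_mul_right hB ha') hX
  have e2 : Ccoc (matBr A B) X =
      (matTr (matMul (matMul a B) X) + matTr (matMul (matMul A b) X))
        - (matTr (matMul (matMul b A) X) + matTr (matMul (matMul B a) X)) := by
    rw [Ccoc, e1, matMul_sub_left hX, matMul_add_left hX, matMul_add_left hX,
      matTr_sub (finSupp_add hsupp1 hsupp2) (finSupp_add hsupp3 hsupp4),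
      matTr_add hsupp1 hsupp2, matTr_add hsupp3 hsupp4]
  -- Step 3: reassociate and cycle traces
  have t1 : matTr (matMul (matMul a B) X) = matTr (matMul a (matMul B X)) := by
    rw [matMul_assoc haD hX]
  have t2 : matTr (matMul (matMul A b) X) = matTr (matMul b (matMul X A)) := by
    rw [matMul_assoc hA hX, ← matTr_mul_comm A (finSupp_mul_left hb' hX)]
    rw [matMul_assoc hbD hA]
  have t3 : matTr (matMul (matMul b A) X) = matTr (matMul b (matMul A X)) := by
    rw [matMul_assoc hbD hX]
  have t4 : matTr (matMul (matMul B a) X) = matTr (matMul a (matMul X B)) := by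
    rw [matMul_assoc hB hX, ← matTr_mul_comm B (finSupp_mul_left ha' hX)]
    rw [matMul_assoc haD hB]
  -- Step 4: recombine
  have e3 : Ccoc A (matBr B X) =
      matTr (matMul a (matMul B X)) - matTr (matMul a (matMul X B)) := by
    rw [Ccoc, ← hadef, matBr, matMul_sub_right haD,
      matTr_sub (finSupp_mul_left ha' (fd_mul hB hX)) (finSupp_mul_left ha' (fd_mul hX hB))]
  have e4 : Ccoc B (matBr X A) =
      matTr (matMul b (matMul X A)) - matTr (matMul b (matMul A X)) := by
    rw [Ccoc, ← hbdef, matBr, matMul_sub_right hbD,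
      matTr_sub (finSupp_mul_left hb' (fd_mul hX hA)) (finSupp_mul_left hb' (fd_mul hA hX))]
  rw [e2, t1, t2, t3, t4, e3, e4]
  ring

/-- The cocycle identity. -/
private lemma Ccoc_cocycle {A B X : ℤ → ℤ → ℂ} (hA : HasFinDiags A) (hB : HasFinDiags B)
    (hX : HasFinDiags X) :
    Ccoc (matBr A B) X + Ccoc (matBr B X) A + Ccoc (matBr X A) B = 0 := by
  have h1 := Ccoc_core hA hB hX
  have h2 := Ccoc_core hB hX hA
  have h3 := Ccoc_core hX hA hB
  have k1 := Ccoc_antisymm (fd_br hB hX) hA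
  have k2 := Ccoc_antisymm (fd_br hX hA) hB
  have k3 := Ccoc_antisymm (fd_br hA hB) hX
  linear_combination (h1 + h2 + h3 + 2 * k1 + 2 * k2 + 2 * k3) / 3

/-! ### Bilinearity lemmas -/

private lemma brJ_add {A B : ℤ → ℤ → ℂ} :
    matBr Jmat (A + B) = matBr Jmat A + matBr Jmat B := by
  show matMul Jmat (A + B) - matMul (A + B) Jmat = _
  rw [matMul_add_right hJ, matMul_add_left hJ]
  show _ = (matMul Jmat A - matMul A Jmat) + (matMul Jmat B - matMul B Jmat)
  abel

private lemma brJ_smul {A : ℤ → ℤ → ℂ} (c : ℂ) (hA : HasFinDiags A) :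
    matBr Jmat (c • A) = c • matBr Jmat A := by
  show matMul Jmat (c • A) - matMul (c • A) Jmat = _
  rw [matMul_smul_right Jmat c hA, matMul_smul_left Jmat c hA, ← smul_sub]
  rfl

private lemma Ccoc_add_left {A B X : ℤ → ℤ → ℂ} (hA : HasFinDiags A) (hB : HasFinDiags B)
    (hX : HasFinDiags X) : Ccoc (A + B) X = Ccoc A X + Ccoc B X := by
  rw [Ccoc, brJ_add, matMul_add_left hX,
    matTr_add (finSupp_mul_left (finSupp_brJ hA) hX) (finSupp_mul_left (finSupp_brJ hB) hX)]
  rfl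

private lemma Ccoc_add_right {A B X : ℤ → ℤ → ℂ} (hA : HasFinDiags A) (hB : HasFinDiags B)
    (hX : HasFinDiags X) : Ccoc A (B + X) = Ccoc A B + Ccoc A X := by
  have haD : HasFinDiags (matBr Jmat A) := finSupp_hasFinDiags (finSupp_brJ hA)
  rw [Ccoc, matMul_add_right haD,
    matTr_add (finSupp_mul_left (finSupp_brJ hA) hB) (finSupp_mul_left (finSupp_brJ hA) hX)]
  rfl

private lemma Ccoc_smul_left {A X : ℤ → ℤ → ℂ} (c : ℂ) (hA : HasFinDiags A)
    (hX : HasFinDiags X) : Ccoc (c • A) X = c * Ccoc A X := by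
  rw [Ccoc, brJ_smul c hA,
    matMul_smul_left X c (finSupp_hasFinDiags (finSupp_brJ hA)),
    matTr_smul c (finSupp_mul_left (finSupp_brJ hA) hX)]
  rfl

private lemma Ccoc_smul_right {A X : ℤ → ℤ → ℂ} (c : ℂ) (hA : HasFinDiags A)
    (hX : HasFinDiags X) : Ccoc A (c • X) = c * Ccoc A X := by
  have haD : HasFinDiags (matBr Jmat A) := finSupp_hasFinDiags (finSupp_brJ hA)
  rw [Ccoc, matMul_smul_right _ c hX,
    matTr_smul c (finSupp_mul_left (finSupp_brJ hA) hX)]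
  rfl

private lemma Ccoc_zero_left (B : ℤ → ℤ → ℂ) : Ccoc 0 B = 0 := by
  have h : matBr Jmat (0 : ℤ → ℤ → ℂ) = 0 := by
    show matMul Jmat 0 - matMul 0 Jmat = 0
    rw [matMul_zero_left, matMul_zero_right, sub_self]
  rw [Ccoc, h, matMul_zero_left, matTr_zero]

private lemma Ccoc_zero_right (A : ℤ → ℤ → ℂ) : Ccoc A 0 = 0 := by
  rw [Ccoc, matMul_zero_right, matTr_zero]

private lemma Ccoc_self {A : ℤ → ℤ → ℂ} (hA : HasFinDiags A) : Ccoc A A = 0 := by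
  have h := Ccoc_antisymm hA hA
  linear_combination h / 2

private lemma matBr_add_left {A B X : ℤ → ℤ → ℂ} (hX : HasFinDiags X) :
    matBr (A + B) X = matBr A X + matBr B X := by
  rw [matBr, matBr, matBr, matMul_add_left hX, matMul_add_right hX]
  abel

private lemma matBr_add_right {A B X : ℤ → ℤ → ℂ} (hA : HasFinDiags A) :
    matBr A (B + X) = matBr A B + matBr A X := by
  rw [matBr, matBr, matBr, matMul_add_right hA, matMul_add_left hA]
  abel

private lemma matBr_smul_left {A B : ℤ → ℤ → ℂ} (c : ℂ) (hA : HasFinDiags A)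
    (hB : HasFinDiags B) : matBr (c • A) B = c • matBr A B := by
  rw [matBr, matBr, matMul_smul_left B c hA, matMul_smul_right B c hA, smul_sub]

private lemma matBr_smul_right {A B : ℤ → ℤ → ℂ} (c : ℂ) (hA : HasFinDiags A)
    (hB : HasFinDiags B) : matBr A (c • B) = c • matBr A B := by
  rw [matBr, matBr, matMul_smul_right A c hB, matMul_smul_left A c hB, smul_sub]

private lemma matBr_self (A : ℤ → ℤ → ℂ) : matBr A A = 0 := by
  rw [matBr, sub_self]

private lemma matBr_zero_left (B : ℤ → ℤ → ℂ) : matBr 0 B = 0 := by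
  rw [matBr, matMul_zero_left, matMul_zero_right, sub_self]

private lemma matBr_zero_right (A : ℤ → ℤ → ℂ) : matBr A 0 = 0 := by
  rw [matBr, matMul_zero_left, matMul_zero_right, sub_self]

/-- Jacobi identity for the matrix bracket. -/
private lemma matBr_jacobi {A B X : ℤ → ℤ → ℂ} (hA : HasFinDiags A) (hB : HasFinDiags B)
    (hX : HasFinDiags X) :
    matBr (matBr A B) X + matBr (matBr B X) A + matBr (matBr X A) B = 0 := by
  have e1 : matBr (matBr A B) X =
      (matMul A (matMul B X) - matMul B (matMul A X))
        - (matMul X (matMul A B) - matMul X (matMul B A)) := by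
    rw [matBr, matBr, matMul_sub_left hX, matMul_sub_right hX,
      matMul_assoc hA hX, matMul_assoc hB hX]
  have e2 : matBr (matBr B X) A =
      (matMul B (matMul X A) - matMul X (matMul B A))
        - (matMul A (matMul B X) - matMul A (matMul X B)) := by
    rw [matBr, matBr, matMul_sub_left hA, matMul_sub_right hA,
      matMul_assoc hB hA, matMul_assoc hX hA]
  have e3 : matBr (matBr X A) B =
      (matMul X (matMul A B) - matMul A (matMul X B))
        - (matMul B (matMul X A) - matMul B (matMul A X)) := by
    rw [matBr, matBr, matMul_sub_left hB, matMul_sub_right hB,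
      matMul_assoc hX hB, matMul_assoc hA hB]
  rw [e1, e2, e3]
  abel

end Aux

/-- `C` is a 2-cocycle on the Lie algebra `glbar`:
`C([A,B],X) + C([B,X],A) + C([X,A],B) = 0`; consequently
`hgl = glbar ⊕ ℂ·K` with bracket `[(A,a),(B,b)] = ([A,B], C(A,B))` is a Lie
algebra over `ℂ` (the bracket is bilinear, alternating, and satisfies the
Jacobi identity), and `K = (0,1)` is central. -/
theorem Ccoc_is_cocycle_and_hgl_is_LieAlgebra :
    (∀ A B X : ℤ → ℤ → ℂ, HasFinDiags A → HasFinDiags B → HasFinDiags X →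
      Ccoc (matBr A B) X + Ccoc (matBr B X) A + Ccoc (matBr X A) B = 0) ∧
    (∀ P Q R : (ℤ → ℤ → ℂ) × ℂ, HasFinDiags P.1 → HasFinDiags Q.1 → HasFinDiags R.1 →
      hglBr (P + Q) R = hglBr P R + hglBr Q R ∧
      hglBr P (Q + R) = hglBr P Q + hglBr P R) ∧
    (∀ (c : ℂ) (P Q : (ℤ → ℤ → ℂ) × ℂ), HasFinDiags P.1 → HasFinDiags Q.1 →
      hglBr (c • P) Q = c • hglBr P Q ∧ hglBr P (c • Q) = c • hglBr P Q) ∧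
    (∀ P : (ℤ → ℤ → ℂ) × ℂ, HasFinDiags P.1 → hglBr P P = 0) ∧
    (∀ P Q R : (ℤ → ℤ → ℂ) × ℂ, HasFinDiags P.1 → HasFinDiags Q.1 → HasFinDiags R.1 →
      hglBr (hglBr P Q) R + hglBr (hglBr Q R) P + hglBr (hglBr R P) Q = 0) ∧
    (∀ P : (ℤ → ℤ → ℂ) × ℂ,
      hglBr ((0 : ℤ → ℤ → ℂ), (1 : ℂ)) P = 0 ∧ hglBr P ((0 : ℤ → ℤ → ℂ), (1 : ℂ)) = 0) := by
  refine ⟨?_, ?_, ?_, ?_, ?_, ?_⟩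
  · -- cocycle identity
    exact fun A B X hA hB hX => Ccoc_cocycle hA hB hX
  · -- additivity
    intro P Q R hP hQ hR
    constructor
    · show (matBr (P.1 + Q.1) R.1, Ccoc (P.1 + Q.1) R.1) = _
      rw [matBr_add_left hR, Ccoc_add_left hP hQ hR]
      rfl
    · show (matBr P.1 (Q.1 + R.1), Ccoc P.1 (Q.1 + R.1)) = _
      rw [matBr_add_right hP, Ccoc_add_right hP hQ hR]
      rfl
  · -- scalar multiplication
    intro c P Q hP hQ
    constructor
    · show (matBr (c • P.1) Q.1, Ccoc (c • P.1) Q.1) = _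
      rw [matBr_smul_left c hP hQ, Ccoc_smul_left c hP hQ]
      rfl
    · show (matBr P.1 (c • Q.1), Ccoc P.1 (c • Q.1)) = _
      rw [matBr_smul_right c hP hQ, Ccoc_smul_right c hP hQ]
      rfl
  · -- alternating
    intro P hP
    show (matBr P.1 P.1, Ccoc P.1 P.1) = 0
    rw [matBr_self, Ccoc_self hP]
    rfl
  · -- Jacobi identity
    intro P Q R hP hQ hR
    show (matBr (matBr P.1 Q.1) R.1 + matBr (matBr Q.1 R.1) P.1 + matBr (matBr R.1 P.1) Q.1,
      Ccoc (matBr P.1 Q.1) R.1 + Ccoc (matBr Q.1 R.1) P.1 + Ccoc (matBr R.1 P.1) Q.1) = 0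
    rw [matBr_jacobi hP hQ hR, Ccoc_cocycle hP hQ hR]
    rfl
  · -- K is central
    intro P
    constructor
    · show (matBr 0 P.1, Ccoc 0 P.1) = 0
      rw [matBr_zero_left, Ccoc_zero_left]
      rfl
    · show (matBr P.1 0, Ccoc P.1 0) = 0
      rw [matBr_zero_right, Ccoc_zero_right]
      rfl
end

section
/- For every integer k ≥ 1, the linear map ν̂^k : hgl → hgl defined by ν̂^k(A, a) = (σ^k A, a − Σ_{−k < i ≤ 0} A_{ii}), where (σ^k A)_{ij} = A_{i−k, j−k}, is a Lie algebra automorphism of hgl (it is bijective and preserves the bracket); in particular C(σ^k A, σ^k B) = C(A,B) − Σ_{−k < i ≤ 0} [A,B]_{ii} for all A, B ∈ glbar. -/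
/-- The shift `(σ^k A)_{ij} = A_{i-k, j-k}`. -/
def shiftMat (k : ℤ) (A : ℤ → ℤ → ℂ) : ℤ → ℤ → ℂ :=
  fun i j => A (i - k) (j - k)

/-- The Lie algebra `glbar` as a subtype. -/
def Glbar : Type := {A : ℤ → ℤ → ℂ // HasFinDiags A}

lemma shiftMat_hasFinDiags (k : ℤ) {A : ℤ → ℤ → ℂ} (hA : HasFinDiags A) :
    HasFinDiags (shiftMat k A) := by
  obtain ⟨S, hS⟩ := hA
  refine ⟨S, fun i j h => ?_⟩
  have : j - k - (i - k) = j - i := by ring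
  exact hS (i - k) (j - k) (by rw [this]; exact h)

/-- The map `ν̂^k : hgl → hgl`,
`ν̂^k(A, a) = (σ^k A, a - Σ_{-k < i ≤ 0} A_{ii})`, on `hgl = glbar ⊕ ℂ·K`. -/
noncomputable def nuhat (k : ℤ) (P : Glbar × ℂ) : Glbar × ℂ :=
  (⟨shiftMat k P.1.1, shiftMat_hasFinDiags k P.1.2⟩,
    P.2 - ∑ i ∈ Finset.Ioc (-k : ℤ) 0, P.1.1 i i)

-- auxiliary
noncomputable def cw (i j : ℤ) : ℂ :=
  (if i ≤ 0 then (1:ℂ) else 0) - (if j ≤ 0 then 1 else 0)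

lemma double_finsum_eq_sum (F : ℤ → ℤ → ℂ) (T : Finset ℤ)
    (h : ∀ i j, F i j ≠ 0 → i ∈ T ∧ j ∈ T) :
    ∑ᶠ i, ∑ᶠ j, F i j = ∑ i ∈ T, ∑ j ∈ T, F i j := by
  have h1 : ∀ i, ∑ᶠ j, F i j = ∑ j ∈ T, F i j := fun i =>
    finsum_eq_finset_sum_of_support_subset _ fun j hj => (h i j hj).2
  calc ∑ᶠ i, ∑ᶠ j, F i j = ∑ᶠ i, ∑ j ∈ T, F i j := finsum_congr h1
    _ = ∑ i ∈ T, ∑ j ∈ T, F i j := by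
        refine finsum_eq_finset_sum_of_support_subset _ fun i hi => ?_
        simp only [Function.mem_support] at hi
        obtain ⟨j, _, hj⟩ := Finset.exists_ne_zero_of_sum_ne_zero hi
        exact (h i j hj).1

lemma matMul_J_left (A : ℤ → ℤ → ℂ) (i j : ℤ) :
    matMul Jmat A i j = (if i ≤ 0 then (1:ℂ) else 0) * A i j := by
  unfold matMul
  rw [finsum_eq_single _ i (fun l hl => by simp [Jmat, Ne.symm hl])]
  simp [Jmat]

lemma matMul_J_right (A : ℤ → ℤ → ℂ) (i j : ℤ) :
    matMul A Jmat i j = (if j ≤ 0 then (1:ℂ) else 0) * A i j := by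
  unfold matMul
  rw [finsum_eq_single _ j (fun l hl => by simp [Jmat, hl])]
  simp [Jmat, mul_comm]

lemma br_J (A : ℤ → ℤ → ℂ) (i j : ℤ) :
    matBr Jmat A i j = cw i j * A i j := by
  simp only [matBr, Pi.sub_apply, matMul_J_left, matMul_J_right, cw]
  ring

lemma Ccoc_eq (A B : ℤ → ℤ → ℂ) :
    Ccoc A B = ∑ᶠ i, ∑ᶠ j, cw i j * (A i j * B j i) := by
  unfold Ccoc matTr
  refine finsum_congr fun i => ?_
  unfold matMul
  refine finsum_congr fun j => ?_
  rw [br_J]; ring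

lemma cw_ne_zero {i j : ℤ} (h : cw i j ≠ 0) : (i ≤ 0 ∧ 0 < j) ∨ (j ≤ 0 ∧ 0 < i) := by
  unfold cw at h
  split_ifs at h <;> simp_all <;> omega

lemma cw_shift (k i j : ℤ) (hk : 1 ≤ k) :
    cw (i+k) (j+k) = cw i j -
      ((if -k < i ∧ i ≤ 0 then (1:ℂ) else 0) - (if -k < j ∧ j ≤ 0 then 1 else 0)) := by
  unfold cw
  split_ifs <;> first | (exfalso; omega) | ring1

lemma shiftMat_matMul (k : ℤ) (A B : ℤ → ℤ → ℂ) :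
    shiftMat k (matMul A B) = matMul (shiftMat k A) (shiftMat k B) := by
  funext i j
  show ∑ᶠ l, A (i-k) l * B l (j-k) = ∑ᶠ l, A (i-k) (l-k) * B (l-k) (j-k)
  exact (finsum_comp (g := fun l => A (i-k) l * B l (j-k))
    (fun l : ℤ => l - k) (Equiv.subRight k).bijective).symm

lemma shiftMat_matBr (k : ℤ) (A B : ℤ → ℤ → ℂ) :
    shiftMat k (matBr A B) = matBr (shiftMat k A) (shiftMat k B) := by
  unfold matBr
  rw [← shiftMat_matMul, ← shiftMat_matMul]
  rfl

/-- For every `k ≥ 1`, `ν̂^k` is a Lie algebra automorphism of `hgl`: it is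
bijective and preserves the bracket `[(A,a),(B,b)] = ([A,B], C(A,B))`, i.e.
`σ^k [A,B] = [σ^k A, σ^k B]` and, in particular,
`C(σ^k A, σ^k B) = C(A,B) - Σ_{-k < i ≤ 0} [A,B]_{ii}`. -/
theorem nuhat_is_automorphism (k : ℤ) (hk : 1 ≤ k) :
    Function.Bijective (nuhat k) ∧
    (∀ A B : ℤ → ℤ → ℂ, HasFinDiags A → HasFinDiags B →
      shiftMat k (matBr A B) = matBr (shiftMat k A) (shiftMat k B) ∧
      Ccoc (shiftMat k A) (shiftMat k B) =
        Ccoc A B - ∑ i ∈ Finset.Ioc (-k : ℤ) 0, matBr A B i i) := by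
  constructor
  · rw [Function.bijective_iff_has_inverse]
    refine ⟨fun P => (⟨shiftMat (-k) P.1.1, shiftMat_hasFinDiags _ P.1.2⟩,
        P.2 + ∑ i ∈ Finset.Ioc (-k : ℤ) 0, shiftMat (-k) P.1.1 i i), ?_, ?_⟩
    · rintro ⟨⟨A, hA⟩, a⟩
      have hAA : shiftMat (-k) (shiftMat k A) = A := by
        funext i j
        show A (i - -k - k) (j - -k - k) = A i j
        congr 1 <;> ring
      unfold nuhat
      refine Prod.ext (Subtype.ext hAA) ?_
      show a - _ + ∑ i ∈ Finset.Ioc (-k : ℤ) 0, shiftMat (-k) (shiftMat k A) i i = a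
      rw [hAA]; ring
    · rintro ⟨⟨A, hA⟩, a⟩
      have hAA : shiftMat k (shiftMat (-k) A) = A := by
        funext i j
        show A (i - k - -k) (j - k - -k) = A i j
        congr 1 <;> ring
      unfold nuhat
      refine Prod.ext (Subtype.ext hAA) ?_
      show a + _ - ∑ i ∈ Finset.Ioc (-k : ℤ) 0, shiftMat (-k) A i i = a
      ring
  · intro A B hA hB
    refine ⟨shiftMat_matBr k A B, ?_⟩
    obtain ⟨SA, hSA⟩ := hA
    obtain ⟨SB, hSB⟩ := hB
    set N : ℕ := (SA ∪ SB).sup fun s => s.natAbs with hN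
    have hA' : ∀ i j : ℤ, A i j ≠ 0 → (j - i).natAbs ≤ N := fun i j h => by
      by_contra hc
      exact h (hSA i j fun hm => hc (Finset.le_sup (f := fun s : ℤ => s.natAbs)
        (Finset.mem_union_left _ hm)))
    have hB' : ∀ i j : ℤ, B i j ≠ 0 → (j - i).natAbs ≤ N := fun i j h => by
      by_contra hc
      exact h (hSB i j fun hm => hc (Finset.le_sup (f := fun s : ℤ => s.natAbs)
        (Finset.mem_union_right _ hm)))
    set M : ℤ := (N : ℤ) + k with hM
    set T : Finset ℤ := Finset.Icc (-M) M with hT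
    have memT : ∀ x : ℤ, -M ≤ x → x ≤ M → x ∈ T := fun x h1 h2 => by
      rw [hT, Finset.mem_Icc]; exact ⟨h1, h2⟩
    have e1 : Ccoc A B = ∑ i ∈ T, ∑ j ∈ T, cw i j * (A i j * B j i) := by
      rw [Ccoc_eq]
      refine double_finsum_eq_sum _ _ fun i j h => ?_
      have hcw := cw_ne_zero (left_ne_zero_of_mul h)
      have hAij := hA' i j (left_ne_zero_of_mul (right_ne_zero_of_mul h))
      exact ⟨memT i (by omega) (by omega), memT j (by omega) (by omega)⟩
    have e2 : Ccoc (shiftMat k A) (shiftMat k B)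
        = ∑ i ∈ T, ∑ j ∈ T, cw (i+k) (j+k) * (A i j * B j i) := by
      rw [Ccoc_eq]
      rw [← finsum_comp (g := fun i => ∑ᶠ j, cw i j * (shiftMat k A i j * shiftMat k B j i))
        (fun i : ℤ => i + k) (Equiv.addRight k).bijective]
      have hin : ∀ i : ℤ,
          (∑ᶠ j, cw (i+k) j * (shiftMat k A (i+k) j * shiftMat k B j (i+k)))
          = ∑ᶠ j, cw (i+k) (j+k) * (A i j * B j i) := by
        intro i
        rw [← finsum_comp
          (g := fun j => cw (i+k) j * (shiftMat k A (i+k) j * shiftMat k B j (i+k)))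
          (fun j : ℤ => j + k) (Equiv.addRight k).bijective]
        refine finsum_congr fun j => ?_
        simp [shiftMat]
      rw [finsum_congr hin]
      refine double_finsum_eq_sum _ _ fun i j h => ?_
      have hcw := cw_ne_zero (left_ne_zero_of_mul h)
      have hAij := hA' i j (left_ne_zero_of_mul (right_ne_zero_of_mul h))
      exact ⟨memT i (by omega) (by omega), memT j (by omega) (by omega)⟩
    have hfilter : T.filter (fun i => -k < i ∧ i ≤ 0) = Finset.Ioc (-k:ℤ) 0 := by
      ext x
      simp only [Finset.mem_filter, Finset.mem_Ioc, hT, Finset.mem_Icc]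
      omega
    have e3 : ∑ i ∈ Finset.Ioc (-k:ℤ) 0, matBr A B i i
        = ∑ i ∈ T, ∑ j ∈ T, ((if -k < i ∧ i ≤ 0 then (1:ℂ) else 0)
            - (if -k < j ∧ j ≤ 0 then 1 else 0)) * (A i j * B j i) := by
      have inner1 : ∀ i ∈ Finset.Ioc (-k:ℤ) 0, matBr A B i i
          = (∑ j ∈ T, A i j * B j i) - ∑ j ∈ T, B i j * A j i := by
        intro i hi
        rw [Finset.mem_Ioc] at hi
        show matMul A B i i - matMul B A i i = _
        unfold matMul
        congr 1
        · refine finsum_eq_finset_sum_of_support_subset _ fun j hj => ?_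
          simp only [Function.mem_support] at hj
          have := hA' i j (left_ne_zero_of_mul hj)
          exact memT j (by omega) (by omega)
        · refine finsum_eq_finset_sum_of_support_subset _ fun j hj => ?_
          simp only [Function.mem_support] at hj
          have := hB' i j (left_ne_zero_of_mul hj)
          exact memT j (by omega) (by omega)
      have split : ∀ i j : ℤ, ((if -k < i ∧ i ≤ 0 then (1:ℂ) else 0)
            - (if -k < j ∧ j ≤ 0 then 1 else 0)) * (A i j * B j i)
          = (if -k < i ∧ i ≤ 0 then A i j * B j i else 0)
            - (if -k < j ∧ j ≤ 0 then A i j * B j i else 0) := by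
        intro i j; split_ifs <;> ring
      calc ∑ i ∈ Finset.Ioc (-k:ℤ) 0, matBr A B i i
          = (∑ i ∈ Finset.Ioc (-k:ℤ) 0, ∑ j ∈ T, A i j * B j i)
            - ∑ i ∈ Finset.Ioc (-k:ℤ) 0, ∑ j ∈ T, B i j * A j i := by
            rw [← Finset.sum_sub_distrib]
            exact Finset.sum_congr rfl inner1
        _ = (∑ i ∈ T, ∑ j ∈ T, (if -k < i ∧ i ≤ 0 then A i j * B j i else 0))
            - ∑ i ∈ T, ∑ j ∈ T, (if -k < j ∧ j ≤ 0 then A i j * B j i else 0) := by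
            congr 1
            · rw [← hfilter, Finset.sum_filter]
              refine Finset.sum_congr rfl fun i _ => ?_
              split_ifs with h
              · rfl
              · simp
            · rw [← hfilter, Finset.sum_comm]
              refine Finset.sum_congr rfl fun i _ => ?_
              rw [Finset.sum_filter]
              exact Finset.sum_congr rfl fun j _ => by split_ifs <;> ring
        _ = _ := by
            rw [← Finset.sum_sub_distrib]
            refine Finset.sum_congr rfl fun i _ => ?_
            rw [← Finset.sum_sub_distrib]
            exact Finset.sum_congr rfl fun j _ => (split i j).symm
    rw [e1, e2, e3, ← Finset.sum_sub_distrib]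
    refine Finset.sum_congr rfl fun i _ => ?_
    rw [← Finset.sum_sub_distrib]
    refine Finset.sum_congr rfl fun j _ => ?_
    rw [cw_shift k i j hk]
    ring
end

section
/- For every s ∈ ℂ, the linear map φ_s : 𝒟 → glbar determined by letting φ_s(t^k f(D)) be the matrix whose (j−k, j) entry equals f(s−j) for each j ∈ ℤ and whose other entries are 0, is a well-defined injective homomorphism of Lie algebras: φ_s(t^k f(D)) has only finitely many nonzero diagonals, φ_s([u,v]_𝒟) = φ_s(u)φ_s(v) − φ_s(v)φ_s(u) for all u, v ∈ 𝒟, and φ_s(u) = 0 implies u = 0. -/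
open Polynomial

/-- `𝒟 = ⊕_{k∈ℤ} ℂ[x]`: the element with `f` in component `k` is written
`tᵏ f(D)`, i.e. `Finsupp.single k f`. -/
abbrev Dcal : Type := ℤ →₀ Polynomial ℂ

/-- The bracket on `𝒟`, the bilinear extension of
`[tʳ f(D), tˢ g(D)] = t^{r+s}( f(x+s)g(x) - f(x)g(x+r) )`. -/
noncomputable def Dbr (u v : Dcal) : Dcal :=
  u.sum fun r f => v.sum fun s g =>
    Finsupp.single (r + s) (f.comp (X + C (s : ℂ)) * g - f * g.comp (X + C (r : ℂ)))

/-- The map `φ_s : 𝒟 → glbar`: `φ_s(tᵏ f(D))` is the matrix whose `(j-k, j)`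
entry is `f(s-j)`, all other entries `0`. -/
noncomputable def phi (s : ℂ) (u : Dcal) : ℤ → ℤ → ℂ :=
  fun i j => (u (j - i)).eval (s - j)

lemma matMul_phi (s : ℂ) (u v : Dcal) (i j : ℤ) :
    matMul (phi s u) (phi s v) i j
      = ∑ r ∈ u.support, (u r).eval (s - i - r) * (v (j - i - r)).eval (s - j) := by
  have hsub : (Function.support fun k => (u (k - i)).eval (s - k) * (v (j - k)).eval (s - j))
      ⊆ ↑(u.support.image (fun r => i + r)) := by
    intro k hk
    simp only [Function.mem_support] at hk
    simp only [Finset.coe_image, Set.mem_image, Finset.mem_coe, Finsupp.mem_support_iff]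
    refine ⟨k - i, ?_, by ring⟩
    intro h0
    exact hk (by simp [h0])
  simp only [matMul, phi]
  rw [finsum_eq_finset_sum_of_support_subset _ hsub,
    Finset.sum_image (by intro a _ b _ h; exact add_left_cancel h)]
  apply Finset.sum_congr rfl
  intro r hr
  have h1 : i + r - i = r := by ring
  rw [h1]
  congr 2 <;> push_cast <;> ring

/-- For every `s ∈ ℂ`, `φ_s` is a well-defined injective homomorphism of Lie
algebras `𝒟 → glbar`: `φ_s(tᵏ f(D))` has the prescribed entries and only
finitely many nonzero diagonals, `φ_s` is linear, intertwines the brackets,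
and `φ_s(u) = 0` implies `u = 0`. -/
theorem phi_is_injective_hom (s : ℂ) :
    (∀ (k : ℤ) (f : Polynomial ℂ) (i j : ℤ),
      phi s (Finsupp.single k f) i j = if i = j - k then f.eval (s - j) else 0) ∧
    (∀ u : Dcal, HasFinDiags (phi s u)) ∧
    (∀ u v : Dcal, phi s (u + v) = phi s u + phi s v) ∧
    (∀ (c : ℂ) (u : Dcal), phi s (c • u) = c • phi s u) ∧
    (∀ u v : Dcal, phi s (Dbr u v) = matBr (phi s u) (phi s v)) ∧
    (∀ u : Dcal, phi s u = 0 → u = 0) := by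
  refine ⟨?_, ?_, ?_, ?_, ?_, ?_⟩
  · intro k f i j
    simp only [phi, Finsupp.single_apply]
    by_cases h : i = j - k
    · rw [if_pos (by omega), if_pos h]
    · rw [if_neg (by omega), if_neg h, Polynomial.eval_zero]
  · intro u
    exact ⟨u.support, fun i j h => by
      simp [phi, Finsupp.notMem_support_iff.mp h]⟩
  · intro u v
    funext i j
    simp [phi]
  · intro c u
    funext i j
    simp [phi]
  · intro u v
    funext i j
    have L : phi s (Dbr u v) i j
        = ∑ r ∈ u.support, ∑ t ∈ v.support,
            (if r + t = j - i then
              (((u r).comp (X + C (t:ℂ)) * (v t)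
                - (u r) * (v t).comp (X + C (r:ℂ)))).eval (s - j)
             else 0) := by
      simp only [phi, Dbr, Finsupp.sum, Finsupp.finset_sum_apply, Finsupp.single_apply,
        Polynomial.eval_finset_sum, apply_ite (Polynomial.eval (s - (j:ℂ))),
        Polynomial.eval_zero]
    have RA : matMul (phi s u) (phi s v) i j
        = ∑ r ∈ u.support, ∑ t ∈ v.support,
            (if r + t = j - i then
              ((u r).eval (s - j + t)) * ((v t).eval (s - j)) else 0) := by
      rw [matMul_phi]
      apply Finset.sum_congr rfl
      intro r hr
      have hcond : ∀ t : ℤ, (r + t = j - i) = (t = j - i - r) := by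
        intro t; exact propext ⟨by omega, by omega⟩
      simp only [hcond]
      rw [Finset.sum_ite_eq' v.support (j - i - r)
        (fun t => ((u r).eval (s - j + t)) * ((v t).eval (s - j)))]
      by_cases hmem : j - i - r ∈ v.support
      · rw [if_pos hmem]
        congr 2
        push_cast; ring
      · rw [if_neg hmem, Finsupp.notMem_support_iff.mp hmem]
        simp
    have RB : matMul (phi s v) (phi s u) i j
        = ∑ r ∈ u.support, ∑ t ∈ v.support,
            (if r + t = j - i then
              ((u r).eval (s - j)) * ((v t).eval (s - j + r)) else 0) := by
      rw [matMul_phi, Finset.sum_comm]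
      apply Finset.sum_congr rfl
      intro t ht
      have hcond : ∀ r : ℤ, (r + t = j - i) = (r = j - i - t) := by
        intro r; exact propext ⟨by omega, by omega⟩
      simp only [hcond]
      rw [Finset.sum_ite_eq' u.support (j - i - t)
        (fun r => ((u r).eval (s - j)) * ((v t).eval (s - j + r)))]
      by_cases hmem : j - i - t ∈ u.support
      · rw [if_pos hmem]
        rw [mul_comm]
        congr 2
        push_cast; ring
      · rw [if_neg hmem, Finsupp.notMem_support_iff.mp hmem]
        simp
    have : matBr (phi s u) (phi s v) i j
        = matMul (phi s u) (phi s v) i j - matMul (phi s v) (phi s u) i j := rfl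
    rw [this, L, RA, RB, ← Finset.sum_sub_distrib]
    apply Finset.sum_congr rfl
    intro r hr
    rw [← Finset.sum_sub_distrib]
    apply Finset.sum_congr rfl
    intro t ht
    split_ifs with h
    · simp [Polynomial.eval_comp]
    · simp
  · intro u hu
    ext k
    have h : ∀ j : ℤ, (u k).eval (s - j) = 0 := by
      intro j
      have := congrFun (congrFun hu (j - k)) j
      simpa [phi, show j - (j - k) = k from by ring] using this
    have hz : u k = 0 := by
      apply Polynomial.eq_zero_of_infinite_isRoot
      apply Set.Infinite.mono (s := Set.range (fun j : ℤ => s - (j : ℂ)))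
      · rintro x ⟨j, rfl⟩
        exact h j
      · apply Set.infinite_range_of_injective
        intro a b hab
        have : (a : ℂ) = b := by linear_combination -hab
        exact_mod_cast this
    simp [hz]
end
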